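/- arXiv:1702.04225 — 3 statements merged into one kernel-verified Lean document; each statement's English description precedes it below -/
import Mathlib

section
/- Let X be a 1-geodesic metric space and W ⊆ X. For any finite collection {C_i}_{i∈I} of coarse complementary components of W and any r ≥ 1, there exists A ≥ 0 such that every C_i is an (r,A)-coarse complementary component of W. -/
open Metric Set
open scoped NNReal

/-- The closed `r`-neighbourhood `N_r(A)` of a subset `A` of a metric space. -/
def nbhd {X : Type*} [PseudoMetricSpace X] (r : ℝ≥0) (A : Set X) : Set X :=
  {x : X | ∃ a ∈ A, nndist x a ≤ r}

/-- The coarse `r`-boundary `∂_r C := {x ∈ X \ C : d(x,C) ≤ r}`. -/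
def coarseBoundary {X : Type*} [PseudoMetricSpace X] (r : ℝ≥0) (C : Set X) : Set X :=
  {x : X | x ∉ C ∧ ∃ c ∈ C, nndist x c ≤ r}

/-- `C` is an `(r,A)`-coarse complementary component of `W`:
`∂_r (C \ N_A(W)) ⊆ N_A(W)`. -/
def IsCCC {X : Type*} [PseudoMetricSpace X] (r A : ℝ≥0) (W C : Set X) : Prop :=
  coarseBoundary r (C \ nbhd A W) ⊆ nbhd A W

/-- `C` is a coarse complementary component of `W`, i.e. an `(r,A)`-coarse complementary
component for some `r ≥ 1`, `A ≥ 0`. -/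
def IsCoarseCompComplement {X : Type*} [PseudoMetricSpace X] (W C : Set X) : Prop :=
  ∃ r A : ℝ≥0, 1 ≤ r ∧ IsCCC r A W C

/-- A coarse complementary component is shallow if contained in some neighbourhood of `W`. -/
def IsShallow {X : Type*} [PseudoMetricSpace X] (W C : Set X) : Prop :=
  ∃ R : ℝ≥0, C ⊆ nbhd R W

/-- A metric space is 1-geodesic if any two points are joined by a discrete geodesic. -/
def OneGeodesic (X : Type*) [PseudoMetricSpace X] : Prop :=
  ∀ x y : X, ∃ (n : ℕ) (c : ℕ → X), c 0 = x ∧ c n = y ∧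
    ∀ i ≤ n, ∀ j ≤ n, dist (c i) (c j) = |(i : ℝ) - (j : ℝ)|

/-- `W` coarsely `n`-separates `X`: there are `n` deep, pairwise coarse disjoint,
coarse complementary components of `W`. -/
def CoarselySeparates {X : Type*} [PseudoMetricSpace X] (n : ℕ) (W : Set X) : Prop :=
  ∃ C : Fin n → Set X,
    (∀ i, IsCoarseCompComplement W (C i)) ∧
    (∀ i, ¬ IsShallow W (C i)) ∧
    ∀ i j : Fin n, i ≠ j → IsShallow W (C i ∩ C j)

lemma nbhd_mono' {X : Type*} [PseudoMetricSpace X] {A A' : ℝ≥0} (h : A ≤ A') (W : Set X) :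
    nbhd A W ⊆ nbhd A' W := fun _ ⟨w, hw, hd⟩ => ⟨w, hw, hd.trans h⟩

lemma isCCC_mono' {X : Type*} [PseudoMetricSpace X] {W C : Set X} {r A A' : ℝ≥0}
    (h : A ≤ A') (hC : IsCCC r A W C) : IsCCC r A' W C := by
  rintro x ⟨hxnot, c, hc, hd⟩
  have hcA : c ∈ C \ nbhd A W := ⟨hc.1, fun h' => hc.2 (nbhd_mono' h W h')⟩
  by_cases hxC : x ∈ C
  · exact not_not.mp fun h2 => hxnot ⟨hxC, h2⟩
  by_cases hxA : x ∈ nbhd A W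
  · exact nbhd_mono' h W hxA
  exact nbhd_mono' h W (hC ⟨fun hm => hxC hm.1, c, hcA, hd⟩)

lemma isCCC_change' {X : Type*} [MetricSpace X] (hX : OneGeodesic X) {W C : Set X}
    {r₀ A r : ℝ≥0} (hr₀ : 1 ≤ r₀) (h : IsCCC r₀ A W C) : IsCCC r (A + r) W C := by
  classical
  rintro x ⟨hxnot, c, hc, hd⟩
  have hcA : c ∈ C \ nbhd A W := ⟨hc.1, fun h' => hc.2 (nbhd_mono' le_self_add W h')⟩
  by_cases hxA : x ∈ nbhd (A + r) W
  · exact hxA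
  have hxC : x ∉ C := fun hxc => hxA (not_not.mp fun h2 => hxnot ⟨hxc, h2⟩)
  obtain ⟨n, g, hg0, hgn, hgd⟩ := hX x c
  have hdist : dist x c = (n : ℝ) := by
    have := hgd 0 (Nat.zero_le n) n le_rfl
    rw [hg0, hgn] at this
    simpa using this
  have hnr : (n : ℝ) ≤ (r : ℝ) := by
    rw [← hdist, ← coe_nndist]
    exact_mod_cast hd
  have hn0 : n ≠ 0 := by
    intro hn
    have : x = c := by
      have : dist x c = 0 := by rw [hdist, hn]; norm_num
      exact dist_eq_zero.mp this
    exact hxC (this ▸ hc.1)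
  have hex : ∃ m, m ≤ n ∧ g m ∈ C \ nbhd A W := ⟨n, le_rfl, hgn ▸ hcA⟩
  set m := Nat.find hex with hm
  obtain ⟨hmn, hgm⟩ := Nat.find_spec hex
  have hm0 : m ≠ 0 := by
    intro h0
    have : g m = x := by rw [h0, hg0]
    exact hxC (this ▸ hgm.1)
  have hm1 : 1 ≤ m := Nat.one_le_iff_ne_zero.mpr hm0
  have hprev : g (m - 1) ∉ C \ nbhd A W := by
    have := Nat.find_min hex (m := m - 1) (by omega)
    intro hmem
    exact this ⟨by omega, hmem⟩
  have hstep : dist (g (m - 1)) (g m) = 1 := by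
    rw [hgd (m - 1) (by omega) m hmn]
    have : ((m - 1 : ℕ) : ℝ) = (m : ℝ) - 1 := by
      push_cast [Nat.cast_sub hm1]; ring
    rw [this]
    rw [abs_of_nonpos (by linarith)]
    ring
  have hbd : g (m - 1) ∈ coarseBoundary r₀ (C \ nbhd A W) := by
    refine ⟨hprev, g m, hgm, ?_⟩
    rw [← NNReal.coe_le_coe, coe_nndist, hstep]
    exact_mod_cast hr₀
  obtain ⟨w, hw, hdw⟩ := h hbd
  refine ⟨w, hw, ?_⟩
  have htri : nndist x w ≤ nndist x (g (m - 1)) + nndist (g (m - 1)) w :=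
    nndist_triangle _ _ _
  have hxg : (nndist x (g (m - 1)) : ℝ) ≤ (r : ℝ) := by
    rw [coe_nndist]
    have := hgd 0 (Nat.zero_le n) (m - 1) (by omega)
    rw [hg0] at this
    rw [this, Nat.cast_zero, zero_sub, abs_neg, abs_of_nonneg (by positivity)]
    have : ((m - 1 : ℕ) : ℝ) ≤ (n : ℝ) := by exact_mod_cast (by omega : m - 1 ≤ n)
    linarith
  rw [← NNReal.coe_le_coe]
  calc (nndist x w : ℝ) ≤ (nndist x (g (m - 1)) : ℝ) + (nndist (g (m - 1)) w : ℝ) := by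
        exact_mod_cast htri
    _ ≤ (r : ℝ) + (A : ℝ) := add_le_add hxg (by exact_mod_cast hdw)
    _ = ((A + r : ℝ≥0) : ℝ) := by push_cast; ring

/-- For any finite collection of coarse complementary components of `W`
in a 1-geodesic metric space and any `r ≥ 1`, there is a common `A ≥ 0` such that every
member of the collection is an `(r,A)`-coarse complementary component of `W`. -/
theorem exists_common_param_coarseComp {X : Type*} [MetricSpace X] (hX : OneGeodesic X)
    (W : Set X) {ι : Type*} [Finite ι] (C : ι → Set X)
    (hC : ∀ i, IsCoarseCompComplement W (C i)) (r : ℝ≥0) (hr : 1 ≤ r) :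
    ∃ A : ℝ≥0, ∀ i, IsCCC r A W (C i) := by
  classical
  have := Fintype.ofFinite ι
  choose r₀ A₀ hr₀ hCCC using hC
  refine ⟨Finset.univ.sup fun i => A₀ i + r, fun i => ?_⟩
  exact isCCC_mono' (Finset.le_sup (Finset.mem_univ i)) (isCCC_change' hX (hr₀ i) (hCCC i))
end

section
/- Suppose X and Y are 1-geodesic metric spaces and f : X → Y is an (η,φ,B)-coarse isometry. If W ⊆ X coarsely n-separates X, then f(W) coarsely n-separates Y. -/
open Metric Set
open scoped NNReal

/-- A proper nondecreasing function `ℝ≥0 → ℝ≥0`: nondecreasing and tending to infinity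
(equivalently, preimages of compact sets are compact). -/
def ProperND (η : ℝ≥0 → ℝ≥0) : Prop :=
  Monotone η ∧ Filter.Tendsto η Filter.atTop Filter.atTop

/-- `f : X → Y` is an `(η,φ)`-coarse embedding:
`η(d(x,y)) ≤ d(f x, f y) ≤ φ(d(x,y))` for all `x, y`. -/
def IsCoarseEmbeddingWith {X Y : Type*} [PseudoMetricSpace X] [PseudoMetricSpace Y]
    (η φ : ℝ≥0 → ℝ≥0) (f : X → Y) : Prop :=
  ∀ x y : X, η (nndist x y) ≤ nndist (f x) (f y) ∧ nndist (f x) (f y) ≤ φ (nndist x y)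

/-- `f` is a coarse embedding: an `(η,φ)`-coarse embedding for some proper
nondecreasing `η, φ`. -/
def IsCoarseEmbedding {X Y : Type*} [PseudoMetricSpace X] [PseudoMetricSpace Y]
    (f : X → Y) : Prop :=
  ∃ η φ : ℝ≥0 → ℝ≥0, ProperND η ∧ ProperND φ ∧ IsCoarseEmbeddingWith η φ f

/-- `f` is `B`-dense: `N_B(f(X)) = Y`. -/
def IsCoarselyDense {X Y : Type*} [PseudoMetricSpace Y] (B : ℝ≥0) (f : X → Y) : Prop :=
  ∀ y : Y, ∃ x : X, nndist (f x) y ≤ B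

/-- A coarse isometry is a coarsely surjective coarse embedding. -/
def IsCoarseIsometry {X Y : Type*} [PseudoMetricSpace X] [PseudoMetricSpace Y]
    (f : X → Y) : Prop :=
  IsCoarseEmbedding f ∧ ∃ B : ℝ≥0, IsCoarselyDense B f

/-- A geodesic metric space: any two points are joined by an isometrically embedded
segment. -/
def IsGeodesicSpace (X : Type*) [PseudoMetricSpace X] : Prop :=
  ∀ x y : X, ∃ γ : ℝ → X, γ 0 = x ∧ γ (dist x y) = y ∧
    ∀ s ∈ Set.Icc (0 : ℝ) (dist x y), ∀ t ∈ Set.Icc (0 : ℝ) (dist x y),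
      dist (γ s) (γ t) = |s - t|

/-!
The components of `f(W)` are the `B`-neighbourhoods `N_B(f(C_i))` of the images of the
components `C_i` of `W`. Everything rests on a crossing estimate: in a 1-geodesic space a discrete
geodesic from a point of an `(r,A)`-component `C` to a point outside `C` must leave
`C \ N_A(W)` through its `1`-boundary, hence passes within `A` of `W`. So two points on opposite
sides of `C` at distance `t` both lie within `2t + A` of `W`. Since `f` is a coarse embedding,
points of `Y` that are close together pull back to points of `X` that are close together, and
the crossing estimate is transported to `Y`; depth and coarse disjointness are transported the
same way, using that `η` is proper and `φ` is monotone.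
-/

section

variable {X Y : Type*} [PseudoMetricSpace X] [PseudoMetricSpace Y]

lemma nbhd_mono {r s : ℝ≥0} (hrs : r ≤ s) (A : Set X) : nbhd r A ⊆ nbhd s A :=
  fun _ ⟨a, ha, hxa⟩ => ⟨a, ha, hxa.trans hrs⟩

lemma mem_nbhd_of_nndist_le {r s : ℝ≥0} {A : Set X} {x y : X} (hx : x ∈ nbhd r A)
    (hyx : nndist y x ≤ s) : y ∈ nbhd (s + r) A := by
  obtain ⟨a, ha, hxa⟩ := hx
  exact ⟨a, ha, (nndist_triangle y x a).trans (add_le_add hyx hxa)⟩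

lemma coarseBoundary_mono {r s : ℝ≥0} (hrs : r ≤ s) (C : Set X) :
    coarseBoundary r C ⊆ coarseBoundary s C :=
  fun _ ⟨hx, c, hc, hxc⟩ => ⟨hx, c, hc, hxc.trans hrs⟩

lemma exists_forall_le_of_tendsto_atTop {η : ℝ≥0 → ℝ≥0}
    (hη : Filter.Tendsto η Filter.atTop Filter.atTop) (M : ℝ≥0) :
    ∃ ρ : ℝ≥0, ∀ t, η t ≤ M → t ≤ ρ := by
  obtain ⟨ρ, hρ⟩ := Filter.eventually_atTop.mp (Filter.tendsto_atTop.mp hη (M + 1))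
  refine ⟨ρ, fun t ht => le_of_not_gt fun hρt => ?_⟩
  have : M + 1 ≤ M := (hρ t hρt.le).trans ht
  simp at this

/-- The first point of a discrete geodesic from `a` to `b` that leaves `S`. -/
lemma OneGeodesic.exists_mem_coarseBoundary_one (hX : OneGeodesic X) {S : Set X} {a b : X}
    (ha : a ∈ S) (hb : b ∉ S) : ∃ z ∈ coarseBoundary 1 S, nndist a z ≤ nndist a b := by
  classical
  obtain ⟨m, c, rfl, rfl, hc⟩ := hX a b
  have hexit : ∃ k, c k ∉ S := ⟨m, hb⟩
  obtain ⟨k, hkS, hmin⟩ : ∃ k, c k ∉ S ∧ ∀ j < k, c j ∈ S :=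
    ⟨Nat.find hexit, Nat.find_spec hexit, fun j hj => not_not.mp (Nat.find_min hexit hj)⟩
  have hkm : k ≤ m := le_of_not_gt fun hmk => hb (hmin m hmk)
  have hk0 : k ≠ 0 := by rintro rfl; exact hkS ha
  refine ⟨c k, ⟨hkS, c (k - 1), hmin _ (by omega), ?_⟩, ?_⟩
  · rw [← NNReal.coe_le_coe, coe_nndist, hc k hkm (k - 1) (by omega), Nat.cast_sub (by omega)]
    simp
  · rw [← NNReal.coe_le_coe, coe_nndist, coe_nndist, hc 0 (Nat.zero_le m) k hkm,
      hc 0 (Nat.zero_le m) m le_rfl]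
    simpa using hkm

lemma IsCCC.mem_nbhd_of_mem_of_notMem (hX : OneGeodesic X) {r A : ℝ≥0} (hr : 1 ≤ r)
    {W C : Set X} (hC : IsCCC r A W C) {a b : X} (ha : a ∈ C) (hb : b ∉ C) :
    a ∈ nbhd (nndist a b + A) W := by
  by_cases haW : a ∈ nbhd A W
  · exact nbhd_mono le_add_self W haW
  · obtain ⟨z, hz, haz⟩ := hX.exists_mem_coarseBoundary_one (S := C \ nbhd A W) ⟨ha, haW⟩
      fun hbS => hb hbS.1
    exact mem_nbhd_of_nndist_le (hC (coarseBoundary_mono hr _ hz)) haz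

lemma IsCCC.mem_nbhd_of_notMem (hX : OneGeodesic X) {r A : ℝ≥0} (hr : 1 ≤ r)
    {W C : Set X} (hC : IsCCC r A W C) {a b : X} (ha : a ∈ C) (hb : b ∉ C) {t : ℝ≥0}
    (hab : nndist a b ≤ t) : b ∈ nbhd (t + (t + A)) W := by
  have haW := hC.mem_nbhd_of_mem_of_notMem hX hr ha hb
  exact nbhd_mono (by gcongr) W
    (mem_nbhd_of_nndist_le haW (by rwa [nndist_comm] : nndist b a ≤ t))

namespace IsCoarseEmbeddingWith

variable {η φ : ℝ≥0 → ℝ≥0} {f : X → Y}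

lemma mem_nbhd_image (hf : IsCoarseEmbeddingWith η φ f) (hφ : Monotone φ) {W : Set X}
    {s B : ℝ≥0} {x : X} (hx : x ∈ nbhd s W) {y : Y} (hy : nndist y (f x) ≤ B) :
    y ∈ nbhd (B + φ s) (f '' W) := by
  obtain ⟨w, hw, hxw⟩ := hx
  exact mem_nbhd_of_nndist_le ⟨f w, mem_image_of_mem f hw, (hf x w).2.trans (hφ hxw)⟩ hy

lemma exists_nndist_le (hf : IsCoarseEmbeddingWith η φ f)
    (hη : Filter.Tendsto η Filter.atTop Filter.atTop) (M : ℝ≥0) :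
    ∃ ρ : ℝ≥0, ∀ x x', nndist (f x) (f x') ≤ M → nndist x x' ≤ ρ := by
  obtain ⟨ρ, hρ⟩ := exists_forall_le_of_tendsto_atTop hη M
  exact ⟨ρ, fun x x' h => hρ _ ((hf x x').1.trans h)⟩

lemma not_isShallow_nbhd_image (hf : IsCoarseEmbeddingWith η φ f)
    (hη : Filter.Tendsto η Filter.atTop Filter.atTop) {B : ℝ≥0} {W C : Set X}
    (hC : ¬ IsShallow W C) : ¬ IsShallow (f '' W) (nbhd B (f '' C)) := by
  rintro ⟨R, hR⟩
  obtain ⟨ρ, hρ⟩ := hf.exists_nndist_le hη R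
  refine hC ⟨ρ, fun x hx => ?_⟩
  obtain ⟨_, ⟨w, hw, rfl⟩, hxw⟩ :=
    hR ⟨f x, mem_image_of_mem f hx, (nndist_self _).trans_le B.2⟩
  exact ⟨w, hw, hρ x w hxw⟩

lemma isCoarseCompComplement_nbhd_image (hX : OneGeodesic X)
    (hf : IsCoarseEmbeddingWith η φ f) (hη : Filter.Tendsto η Filter.atTop Filter.atTop)
    (hφ : Monotone φ) {B : ℝ≥0} (hB : IsCoarselyDense B f) {W C : Set X}
    (hC : IsCoarseCompComplement W C) :
    IsCoarseCompComplement (f '' W) (nbhd B (f '' C)) := by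
  obtain ⟨r, A, hr, hCA⟩ := hC
  obtain ⟨ρ, hρ⟩ := hf.exists_nndist_le hη (B + 1 + B)
  refine ⟨1, B + φ (ρ + (ρ + A)), le_rfl, ?_⟩
  rintro y ⟨hyD, z, ⟨⟨_, ⟨x, hx, rfl⟩, hxz⟩, -⟩, hyz⟩
  by_contra hyW
  obtain ⟨x', hx'y⟩ := hB y
  have hx' : x' ∉ C := fun hx'C =>
    hyD ⟨⟨f x', mem_image_of_mem f hx'C, by rwa [nndist_comm]⟩, hyW⟩
  have hxx' : nndist x x' ≤ ρ := hρ x x' <| calc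
    nndist (f x) (f x') ≤ nndist (f x) z + nndist z y + nndist y (f x') :=
      (nndist_triangle _ y _).trans (by gcongr; exact nndist_triangle _ z _)
    _ ≤ B + 1 + B := by
      gcongr
      · rwa [nndist_comm]
      · rwa [nndist_comm]
      · rwa [nndist_comm]
  exact hyW (hf.mem_nbhd_image hφ (hCA.mem_nbhd_of_notMem hX hr hx hx' hxx')
    (by rwa [nndist_comm]))

lemma isShallow_nbhd_image_inter (hX : OneGeodesic X)
    (hf : IsCoarseEmbeddingWith η φ f) (hη : Filter.Tendsto η Filter.atTop Filter.atTop)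
    (hφ : Monotone φ) {B : ℝ≥0} {W C C' : Set X} (hC' : IsCoarseCompComplement W C')
    (hCC' : IsShallow W (C ∩ C')) :
    IsShallow (f '' W) (nbhd B (f '' C) ∩ nbhd B (f '' C')) := by
  obtain ⟨r, A, hr, hCA⟩ := hC'
  obtain ⟨R, hR⟩ := hCC'
  obtain ⟨ρ, hρ⟩ := hf.exists_nndist_le hη (B + B)
  refine ⟨B + φ (max R (ρ + (ρ + A))), ?_⟩
  rintro y ⟨⟨_, ⟨x, hx, rfl⟩, hyx⟩, ⟨_, ⟨x', hx', rfl⟩, hyx'⟩⟩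
  refine hf.mem_nbhd_image hφ (x := x) ?_ hyx
  by_cases hxC' : x ∈ C'
  · exact nbhd_mono (le_max_left _ _) W (hR ⟨hx, hxC'⟩)
  · have hx'x : nndist x' x ≤ ρ := hρ x' x <|
      (nndist_triangle _ y _).trans (add_le_add (by rwa [nndist_comm]) hyx)
    exact nbhd_mono (le_max_right _ _) W (hCA.mem_nbhd_of_notMem hX hr hx' hxC' hx'x)

end IsCoarseEmbeddingWith

end

theorem coarselySeparates_image_general {X Y : Type*} [MetricSpace X] [MetricSpace Y]
    (hX : OneGeodesic X)
    (η φ : ℝ≥0 → ℝ≥0) (B : ℝ≥0) (hη : ProperND η) (hφ : ProperND φ)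
    (f : X → Y) (hf : IsCoarseEmbeddingWith η φ f) (hB : IsCoarselyDense B f)
    (W : Set X) (n : ℕ) (hW : CoarselySeparates n W) :
    CoarselySeparates n (f '' W) := by
  obtain ⟨C, hCcc, hdeep, hdisj⟩ := hW
  refine ⟨fun i => nbhd B (f '' C i), fun i => ?_, fun i => ?_, fun i j hij => ?_⟩
  · exact hf.isCoarseCompComplement_nbhd_image hX hη.2 hφ.1 hB (hCcc i)
  · exact hf.not_isShallow_nbhd_image hη.2 (hdeep i)
  · exact hf.isShallow_nbhd_image_inter hX hη.2 hφ.1 (hCcc j) (hdisj i j hij)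

/-- If `X` and `Y` are 1-geodesic metric spaces, `f : X → Y` is an
`(η,φ,B)`-coarse isometry and `W ⊆ X` coarsely `n`-separates `X`, then `f(W)` coarsely
`n`-separates `Y`. -/
theorem coarselySeparates_image {X Y : Type*} [MetricSpace X] [MetricSpace Y]
    (hX : OneGeodesic X) (hY : OneGeodesic Y)
    (η φ : ℝ≥0 → ℝ≥0) (B : ℝ≥0) (hη : ProperND η) (hφ : ProperND φ)
    (f : X → Y) (hf : IsCoarseEmbeddingWith η φ f) (hB : IsCoarselyDense B f)
    (W : Set X) (n : ℕ) (hW : CoarselySeparates n W) :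
    CoarselySeparates n (f '' W) :=
  coarselySeparates_image_general hX η φ B hη hφ f hf hB W n hW
end

section
/- Let G be a group generated by a finite set S, equipped with the word metric d_S, and let H ≤ G be a subgroup. Suppose there exist a constant A ≥ 0 and a coarse complementary component C of H such that both C and G \ C are deep, and for every g ∈ G either gH ⊆ C ∪ N_A(H) or gH ⊆ (G \ C) ∪ N_A(H). Then there exists a proper H-almost invariant set X ⊆ G such that XH = X. -/
open Metric Set
open scoped NNReal Pointwise

/-- The word length of `g` with respect to a generating set `S`: the least `n` such
that `g` is a product of `n` elements of `S ∪ S⁻¹`. -/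
noncomputable def wordLength {G : Type*} [Group G] (S : Set G) (g : G) : ℕ :=
  sInf {n : ℕ | ∃ l : List G, (∀ x ∈ l, x ∈ S ∨ x⁻¹ ∈ S) ∧ l.prod = g ∧ l.length = n}

/-- The metric on `G` is the word metric with respect to `S`. -/
def IsWordMetric {G : Type*} [Group G] [MetricSpace G] (S : Set G) : Prop :=
  ∀ g h : G, dist g h = wordLength S (g⁻¹ * h)

/-- A subset `A ⊆ G` is `H`-finite if `A ⊆ H·R` for some finite `R ⊆ G`. -/
def HFinite {G : Type*} [Group G] (H : Subgroup G) (A : Set G) : Prop :=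
  ∃ R : Set G, R.Finite ∧ A ⊆ (H : Set G) * R

/-- A subset `C ⊆ G` is `H`-almost invariant if for every `g ∈ G` the symmetric
difference of `C` and `Cg` is `H`-finite. -/
def HAlmostInvariant {G : Type*} [Group G] (H : Subgroup G) (C : Set G) : Prop :=
  ∀ g : G, HFinite H (symmDiff C ((fun x => x * g) '' C))

/-!
Let `X` be the set of `x` whose coset `xH` lies in `C ∪ N_A(H)`; by the splitting hypothesis
every other coset lies in `(G \ C) ∪ N_A(H)`, and `XH = X` by construction. A point of
`X △ Xg` is within `d(1, g)` of a point on the other side of `C`, and walking along a geodesic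
between the two, the walk leaves `C \ N_A₀(H)` through its coarse boundary, which lies in
`N_A₀(H)`. Hence `X △ Xg` lies in a bounded neighbourhood of `H`, which is `H`-finite because
balls of the word metric are finite. Conversely an `H`-finite set lies in a bounded
neighbourhood of `H`, so if `X` or `G \ X` were `H`-finite, `C` or `G \ C` would be shallow.
-/

lemma Nat.exists_lt_and_not_succ {p : ℕ → Prop} (h0 : p 0) {m : ℕ} (hm : ¬ p m) :
    ∃ k < m, p k ∧ ¬ p (k + 1) := by
  induction m with
  | zero => exact absurd h0 hm
  | succ m ih =>
    by_cases hpm : p m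
    · exact ⟨m, m.lt_succ_self, hpm, hm⟩
    · obtain ⟨k, hk, hpk⟩ := ih hpm
      exact ⟨k, hk.trans m.lt_succ_self, hpk⟩

lemma Set.Finite.pow {M : Type*} [Monoid M] {T : Set M} (hT : T.Finite) (n : ℕ) :
    (T ^ n).Finite := by
  induction n with
  | zero => simp
  | succ n ih => rw [pow_succ]; exact ih.mul hT

lemma List.prod_mem_pow_length {M : Type*} [Monoid M] {T : Set M} :
    ∀ {l : List M}, (∀ x ∈ l, x ∈ T) → l.prod ∈ T ^ l.length
  | [], _ => by simp
  | a :: l, hl => by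
    rw [List.prod_cons, List.length_cons, pow_succ']
    exact Set.mul_mem_mul (hl a List.mem_cons_self)
      (List.prod_mem_pow_length fun x hx => hl x (List.mem_cons_of_mem a hx))

section WordLength

variable {G : Type*} [Group G] {S : Set G}

lemma wordLength_prod_le_length {l : List G} (hl : ∀ x ∈ l, x ∈ S ∨ x⁻¹ ∈ S) :
    wordLength S l.prod ≤ l.length :=
  Nat.sInf_le ⟨l, hl, rfl, rfl⟩

lemma exists_list_length_eq_wordLength (hSgen : Subgroup.closure S = ⊤) (g : G) :
    ∃ l : List G, (∀ x ∈ l, x ∈ S ∨ x⁻¹ ∈ S) ∧ l.prod = g ∧ l.length = wordLength S g := by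
  have hg : g ∈ Submonoid.closure (S ∪ S⁻¹) := by
    rw [← Subgroup.closure_toSubmonoid, hSgen]; trivial
  obtain ⟨l, hl, hprod⟩ := Submonoid.exists_list_of_mem_closure hg
  exact Nat.sInf_mem (s := {n | ∃ l : List G, (∀ x ∈ l, x ∈ S ∨ x⁻¹ ∈ S) ∧ l.prod = g ∧
    l.length = n}) ⟨l.length, l, fun x hx => hl x hx, hprod, rfl⟩

lemma finite_setOf_wordLength_le (hSfin : S.Finite) (hSgen : Subgroup.closure S = ⊤) (n : ℕ) :
    {g : G | wordLength S g ≤ n}.Finite := by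
  refine ((Set.finite_Iic n).biUnion fun k _ => (hSfin.union hSfin.inv).pow k).subset ?_
  intro g hg
  obtain ⟨l, hl, rfl, hlen⟩ := exists_list_length_eq_wordLength hSgen g
  exact Set.mem_biUnion (hlen.trans_le hg) (List.prod_mem_pow_length hl)

end WordLength

namespace IsWordMetric

variable {G : Type*} [Group G] [MetricSpace G] {S : Set G}

lemma nndist_eq (hword : IsWordMetric S) (x y : G) :
    nndist x y = wordLength S (x⁻¹ * y) :=
  NNReal.coe_injective (by rw [coe_nndist, hword x y, NNReal.coe_natCast])

lemma nndist_mul_left (hword : IsWordMetric S) (g x y : G) :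
    nndist (g * x) (g * y) = nndist x y := by
  rw [hword.nndist_eq, hword.nndist_eq, mul_inv_rev, mul_assoc, inv_mul_cancel_left]

lemma finite_setOf_nndist_le (hword : IsWordMetric S) (hSfin : S.Finite)
    (hSgen : Subgroup.closure S = ⊤) (ρ : ℝ≥0) : {g : G | nndist 1 g ≤ ρ}.Finite := by
  refine (finite_setOf_wordLength_le hSfin hSgen ⌈(ρ : ℝ)⌉₊).subset fun g hg => ?_
  have hg' : (wordLength S g : ℝ) ≤ ρ := by
    simpa [hword.nndist_eq, ← NNReal.coe_le_coe] using hg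
  exact Nat.cast_le.mp (hg'.trans (Nat.le_ceil _))

lemma exists_geodesic (hword : IsWordMetric S) (hSgen : Subgroup.closure S = ⊤) (x y : G) :
    ∃ (m : ℕ) (z : ℕ → G), z 0 = x ∧ z m = y ∧ (m : ℝ≥0) = nndist x y ∧
      (∀ i < m, nndist (z i) (z (i + 1)) ≤ 1) ∧ ∀ i, nndist x (z i) ≤ i := by
  obtain ⟨l, hl, hprod, hlen⟩ := exists_list_length_eq_wordLength hSgen (x⁻¹ * y)
  refine ⟨l.length, fun i => x * (l.take i).prod, by simp, ?_, ?_, fun i hi => ?_, fun i => ?_⟩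
  · simp [hprod]
  · rw [hword.nndist_eq, hlen]
  · have hi' : i < l.length := hi
    rw [hword.nndist_mul_left, List.prod_take_succ l i hi', hword.nndist_eq, inv_mul_cancel_left]
    have h1 : wordLength S l[i] ≤ 1 := by
      simpa using wordLength_prod_le_length (l := [l[i]]) (by simpa using hl _ (l.getElem_mem hi'))
    exact_mod_cast h1
  · have hx := hword.nndist_mul_left x 1 (l.take i).prod
    rw [mul_one] at hx
    rw [hx, hword.nndist_eq, inv_one, one_mul]
    have h1 := wordLength_prod_le_length fun a ha => hl a (List.take_subset i l ha)
    exact_mod_cast h1.trans (List.length_take_le i l)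

end IsWordMetric

section Neighbourhoods

variable {X : Type*} [PseudoMetricSpace X] {W : Set X}

lemma nbhd_mono_s19 {ρ ρ' : ℝ≥0} (h : ρ ≤ ρ') : nbhd ρ W ⊆ nbhd ρ' W :=
  fun _ ⟨w, hw, hd⟩ => ⟨w, hw, hd.trans h⟩

lemma mem_nbhd_add_of_nndist_le {ρ s : ℝ≥0} {x y : X} (hx : x ∈ nbhd ρ W)
    (hd : nndist y x ≤ s) : y ∈ nbhd (ρ + s) W := by
  obtain ⟨w, hw, hxw⟩ := hx
  refine ⟨w, hw, ?_⟩
  calc nndist y w ≤ nndist y x + nndist x w := nndist_triangle y x w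
    _ ≤ ρ + s := by rw [add_comm ρ s]; exact add_le_add hd hxw

end Neighbourhoods

lemma HFinite.mono {G : Type*} [Group G] {H : Subgroup G} {A B : Set G} (hB : HFinite H B)
    (hAB : A ⊆ B) : HFinite H A :=
  let ⟨R, hR, hBR⟩ := hB
  ⟨R, hR, hAB.trans hBR⟩

section HFinite

variable {G : Type*} [Group G] [MetricSpace G] {S : Set G} {H : Subgroup G}

lemma hFinite_nbhd (hword : IsWordMetric S) (hSfin : S.Finite) (hSgen : Subgroup.closure S = ⊤)
    (H : Subgroup G) (ρ : ℝ≥0) : HFinite H (nbhd ρ (H : Set G)) := by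
  refine ⟨_, hword.finite_setOf_nndist_le hSfin hSgen ρ, ?_⟩
  rintro x ⟨h, hh, hd⟩
  refine ⟨h, hh, h⁻¹ * x, ?_, mul_inv_cancel_left h x⟩
  show nndist 1 (h⁻¹ * x) ≤ ρ
  rw [← hword.nndist_mul_left h, mul_one, mul_inv_cancel_left, nndist_comm]
  exact hd

lemma HFinite.exists_subset_nbhd (hword : IsWordMetric S) {A : Set G} (hA : HFinite H A) :
    ∃ ρ : ℝ≥0, A ⊆ nbhd ρ (H : Set G) := by
  obtain ⟨R, hR, hAR⟩ := hA
  refine ⟨hR.toFinset.sup (nndist · 1), fun x hx => ?_⟩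
  obtain ⟨h, hh, t, ht, rfl⟩ := hAR hx
  refine ⟨h, hh, ?_⟩
  have hdist : nndist (h * t) h = nndist t 1 := by simpa using hword.nndist_mul_left h t 1
  rw [hdist]
  exact Finset.le_sup (f := (nndist · 1)) (hR.mem_toFinset.mpr ht)

lemma not_hFinite_of_not_isShallow (hword : IsWordMetric S) {A : ℝ≥0} {C Y : Set G}
    (hC : ¬ IsShallow (H : Set G) C) (hCY : C ⊆ Y ∪ nbhd A (H : Set G)) : ¬ HFinite H Y := by
  intro hY
  obtain ⟨ρ, hρ⟩ := hY.exists_subset_nbhd hword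
  exact hC ⟨max ρ A, hCY.trans (Set.union_subset (hρ.trans (nbhd_mono_s19 (le_max_left ρ A)))
    (nbhd_mono_s19 (le_max_right ρ A)))⟩

end HFinite

section CoarseComponent

variable {G : Type*} [Group G] [MetricSpace G] {S : Set G} {r A₀ : ℝ≥0} {W C : Set G}

/-- A geodesic from `x ∈ C` to `y ∉ C` must leave `C \ N_A₀(W)`, and its first point outside
lies in the coarse boundary, hence in `N_A₀(W)`; so `x` is close to `W` unless it is far
from `y`. -/
lemma IsCCC.mem_nbhd_of_mem_of_notMem_s19 (hword : IsWordMetric S) (hSgen : Subgroup.closure S = ⊤)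
    (hr : 1 ≤ r) (hC : IsCCC r A₀ W C) {x y : G} (hx : x ∈ C) (hy : y ∉ C) :
    x ∈ nbhd (A₀ + nndist x y) W := by
  by_cases hxW : x ∈ nbhd A₀ W
  · exact nbhd_mono_s19 le_self_add hxW
  obtain ⟨m, z, hz0, hzm, hm, hstep, hdist⟩ := hword.exists_geodesic hSgen x y
  obtain ⟨k, hk, hzk, hzk'⟩ := Nat.exists_lt_and_not_succ (p := fun i => z i ∈ C \ nbhd A₀ W)
    (by simpa [hz0] using ⟨hx, hxW⟩) (m := m) (by simp [hzm, hy])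
  have hbdry : z (k + 1) ∈ coarseBoundary r (C \ nbhd A₀ W) :=
    ⟨hzk', z k, hzk, by rw [nndist_comm]; exact (hstep k hk).trans hr⟩
  refine nbhd_mono_s19 ?_ (mem_nbhd_add_of_nndist_le (hC hbdry) (hdist (k + 1)))
  rw [← hm]
  gcongr
  exact_mod_cast Nat.succ_le_of_lt hk

lemma IsCCC.mem_nbhd_of_mem_union (hword : IsWordMetric S) (hSgen : Subgroup.closure S = ⊤)
    (hr : 1 ≤ r) (hC : IsCCC r A₀ W C) {A : ℝ≥0} {x y : G} (hx : x ∈ C ∪ nbhd A W)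
    (hy : y ∈ Cᶜ ∪ nbhd A W) : x ∈ nbhd (max A A₀ + nndist x y) W := by
  rcases hx with hx | hx
  · rcases hy with hy | hy
    · refine nbhd_mono_s19 ?_ (hC.mem_nbhd_of_mem_of_notMem_s19 hword hSgen hr hx hy)
      gcongr
      exact le_max_right A A₀
    · refine nbhd_mono_s19 ?_ (mem_nbhd_add_of_nndist_le hy (le_refl (nndist x y)))
      gcongr
      exact le_max_left A A₀
  · exact nbhd_mono_s19 ((le_max_left A A₀).trans le_self_add) hx

lemma IsCCC.symmDiff_mul_right_subset_nbhd (hword : IsWordMetric S)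
    (hSgen : Subgroup.closure S = ⊤) (hr : 1 ≤ r) (hC : IsCCC r A₀ W C) {A : ℝ≥0} {X : Set G}
    (hX : X ⊆ C ∪ nbhd A W) (hXc : Xᶜ ⊆ Cᶜ ∪ nbhd A W) (g : G) :
    ∃ B : ℝ≥0, symmDiff X ((· * g) '' X) ⊆ nbhd B W := by
  refine ⟨max A A₀ + nndist 1 g⁻¹ + nndist 1 g⁻¹, fun x hx => ?_⟩
  rw [Set.image_mul_right, Set.mem_symmDiff] at hx
  have hd : nndist x (x * g⁻¹) = nndist 1 g⁻¹ := by
    simpa using hword.nndist_mul_left x 1 g⁻¹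
  rcases hx with ⟨hxX, hxg⟩ | ⟨hxg, hxX⟩
  · have := hC.mem_nbhd_of_mem_union hword hSgen hr (hX hxX) (hXc hxg)
    rw [hd] at this
    exact nbhd_mono_s19 le_self_add this
  · have := hC.mem_nbhd_of_mem_union hword hSgen hr (hX hxg) (hXc hxX)
    rw [nndist_comm, hd] at this
    exact mem_nbhd_add_of_nndist_le this hd.le

end CoarseComponent

lemma setOf_coset_subset_mul_subgroup {G : Type*} [Group G] (H : Subgroup G) (P : Set G) :
    {x | (x * ·) '' (H : Set G) ⊆ P} * (H : Set G) = {x | (x * ·) '' (H : Set G) ⊆ P} := by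
  refine (Set.subset_mul_left _ H.one_mem).antisymm' ?_
  rintro _ ⟨x, hx, h, hh, rfl⟩ _ ⟨k, hk, rfl⟩
  simpa [mul_assoc] using hx ⟨h * k, H.mul_mem hh hk, rfl⟩

/-- Let `G` be a group with the word metric with respect to a finite
generating set `S` and `H ≤ G` a subgroup. Suppose there are `A ≥ 0` and a coarse
complementary component `C` of `H` such that both `C` and `G \ C` are deep, and for
every `g ∈ G` either `gH ⊆ C ∪ N_A(H)` or `gH ⊆ (G \ C) ∪ N_A(H)`. Then there exists a
proper `H`-almost invariant set `X ⊆ G` with `XH = X`. -/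
theorem exists_proper_almost_invariant {G : Type*} [Group G] [MetricSpace G]
    (S : Set G) (hSfin : S.Finite) (hSgen : Subgroup.closure S = ⊤)
    (hword : IsWordMetric S) (H : Subgroup G) (A : ℝ≥0) (C : Set G)
    (hC : IsCoarseCompComplement (H : Set G) C)
    (hdeep : ¬ IsShallow (H : Set G) C) (hdeep' : ¬ IsShallow (H : Set G) Cᶜ)
    (hsplit : ∀ g : G, ((fun x => g * x) '' (H : Set G)) ⊆ C ∪ nbhd A (H : Set G) ∨
      ((fun x => g * x) '' (H : Set G)) ⊆ Cᶜ ∪ nbhd A (H : Set G)) :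
    ∃ X : Set G, HAlmostInvariant H X ∧ ¬ HFinite H X ∧ ¬ HFinite H Xᶜ ∧
      X * (H : Set G) = X := by
  obtain ⟨r, A₀, hr, hccc⟩ := hC
  set X := {x | (x * ·) '' (H : Set G) ⊆ C ∪ nbhd A (H : Set G)}
  have hself : ∀ x : G, x ∈ (x * ·) '' (H : Set G) := fun x => ⟨1, H.one_mem, mul_one x⟩
  have hX : X ⊆ C ∪ nbhd A (H : Set G) := fun x hx => hx (hself x)
  have hXc : Xᶜ ⊆ Cᶜ ∪ nbhd A (H : Set G) := fun x hx => (hsplit x).resolve_left hx (hself x)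
  refine ⟨X, fun g => ?_, ?_, ?_, setOf_coset_subset_mul_subgroup H _⟩
  · obtain ⟨B, hB⟩ := hccc.symmDiff_mul_right_subset_nbhd hword hSgen hr hX hXc g
    exact (hFinite_nbhd hword hSfin hSgen H B).mono hB
  · refine not_hFinite_of_not_isShallow hword (A := A) hdeep fun x hx => ?_
    by_cases hxX : x ∈ X
    · exact Or.inl hxX
    · exact Or.inr ((hXc hxX).resolve_left (· hx))
  · refine not_hFinite_of_not_isShallow hword (A := A) hdeep' fun x hx => ?_
    by_cases hxX : x ∈ X
    · exact Or.inr ((hX hxX).resolve_left hx)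
    · exact Or.inl hxX
end
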